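/- (Sufficiency direction) With the setup of the optimality characterization, if for every Hermitian Δ satisfying (C1) m_i' Δ_{k,ℓ} m_i = 0 for all i,k,ℓ and (C2) Δ ∈ S_X, we have Tr(Δ) + λ G(Δ) > 0 whenever Δ ≠ 0, where G(Δ) = ‖Δ_{Ω_X^⊥}‖₁ + Re⟨sign(X), Δ_{Ω_X}⟩, then X is the unique global minimizer of f_λ(Z) = Tr(Z) + λ‖Z‖₁ over the feasible set {Z ⪰ 0 : m_i' Z_{k,ℓ} m_i = m_i' X_{k,ℓ} m_i ∀ i,k,ℓ}. -/

import Mathlib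

open scoped ComplexOrder Matrix

/-- Complex sign: z/|z| for z ≠ 0, and 0 at 0. -/
noncomputable def csign (z : ℂ) : ℂ := if z = 0 then 0 else z / (‖z‖ : ℂ)

/-- Entrywise ℓ1 norm. -/
noncomputable def matL1 {I : Type*} [Fintype I] (M : Matrix I I ℂ) : ℝ :=
  ∑ i, ∑ j, ‖M i j‖

/-- Projection onto the support of X. -/
noncomputable def projOn {I : Type*} (X Z : Matrix I I ℂ) : Matrix I I ℂ :=
  Matrix.of fun i j => if X i j = 0 then 0 else Z i j

/-- Projection onto the off-support of X. -/
noncomputable def projOff {I : Type*} (X Z : Matrix I I ℂ) : Matrix I I ℂ :=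
  Matrix.of fun i j => if X i j = 0 then Z i j else 0

/-- G(Δ) = ‖Δ_{Ω_X^⊥}‖₁ + Re⟨sign X, Δ_{Ω_X}⟩. -/
noncomputable def Gfun {I : Type*} [Fintype I] (X Z : Matrix I I ℂ) : ℝ :=
  matL1 (projOff X Z) +
    (∑ i, ∑ j, star (csign (X i j)) * (projOn X Z) i j).re

/-- The quadratic measurement m_i' Z_{k,ℓ} m_i on the (k,ℓ) block of Z. -/
noncomputable def quadMeas {L N : ℕ}
    (Z : Matrix (Fin L × Fin N) (Fin L × Fin N) ℂ)
    (mv : Fin N → ℂ) (k l : Fin L) : ℂ :=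
  ∑ p, ∑ q, star (mv p) * Z (k, p) (l, q) * mv q

/-
Every feasible `Z ⪰ 0` gives a direction `Δ = Z - X` satisfying both (C1) (the measurements of
`Z` and `X` agree) and (C2) (take `c = 1`, since `X + Δ = Z`). The hypothesis then says that
`Tr Δ + λ G(Δ) > 0` whenever `Z ≠ X`. Trace is linear, and `G(Δ) ≤ ‖X + Δ‖₁ - ‖X‖₁` because `G` is
the pairing of `Δ` with a subgradient of the convex function `‖·‖₁` at `X` (checked entry by
entry), so `f_λ(Z) - f_λ(X) ≥ Tr Δ + λ G(Δ) > 0`.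
-/

lemma norm_csign_le_one (a : ℂ) : ‖csign a‖ ≤ 1 := by
  unfold csign
  split_ifs with ha
  · simp
  · rw [norm_div, Complex.norm_real, norm_norm, div_self (norm_ne_zero_iff.mpr ha)]

lemma re_star_csign_mul_le_norm (a z : ℂ) : (star (csign a) * z).re ≤ ‖z‖ :=
  calc (star (csign a) * z).re ≤ ‖star (csign a) * z‖ := Complex.re_le_norm _
    _ = ‖csign a‖ * ‖z‖ := by rw [norm_mul, norm_star]
    _ ≤ ‖z‖ := mul_le_of_le_one_left (norm_nonneg z) (norm_csign_le_one a)

lemma re_star_csign_mul_self (a : ℂ) : (star (csign a) * a).re = ‖a‖ := by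
  unfold csign
  split_ifs with ha
  · simp [ha]
  · have hpos : (0 : ℝ) < ‖a‖ := norm_pos_iff.mpr ha
    rw [star_div₀, Complex.star_def, Complex.conj_ofReal, div_mul_eq_mul_div, Complex.conj_mul',
      ← Complex.ofReal_pow, ← Complex.ofReal_div, Complex.ofReal_re, sq, mul_div_assoc,
      div_self hpos.ne', mul_one]

/-- Entrywise subgradient inequality for `‖·‖₁` at `a`, with subgradient `csign a` on the
support of `a` and the unit ball off it. -/
lemma norm_sub_off_add_re_sign_sub_on_add_norm_le (a z : ℂ) :
    ‖(if a = 0 then z - a else 0)‖ + (star (csign a) * (if a = 0 then 0 else z - a)).re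
      + ‖a‖ ≤ ‖z‖ := by
  by_cases ha : a = 0
  · simp [ha]
  · simp only [ha, if_false, norm_zero, zero_add, mul_sub, Complex.sub_re,
      re_star_csign_mul_self]
    linarith [re_star_csign_mul_le_norm a z]

lemma Gfun_sub_add_matL1_le {I : Type*} [Fintype I] (X Z : Matrix I I ℂ) :
    Gfun X (Z - X) + matL1 X ≤ matL1 Z := by
  simp only [Gfun, matL1, projOff, projOn, Matrix.of_apply, Matrix.sub_apply, Complex.re_sum,
    ← Finset.sum_add_distrib]
  exact Finset.sum_le_sum fun i _ => Finset.sum_le_sum fun j _ =>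
    norm_sub_off_add_re_sign_sub_on_add_norm_le (X i j) (Z i j)

lemma quadMeas_sub {L N : ℕ} (Z W : Matrix (Fin L × Fin N) (Fin L × Fin N) ℂ)
    (mv : Fin N → ℂ) (k l : Fin L) :
    quadMeas (Z - W) mv k l = quadMeas Z mv k l - quadMeas W mv k l := by
  simp only [quadMeas, Matrix.sub_apply, mul_sub, sub_mul, Finset.sum_sub_distrib]

theorem stmt_10 (L N M : ℕ) (x : Fin L × Fin N → ℂ)
    (mvec : Fin M → Fin N → ℂ)
    (X : Matrix (Fin L × Fin N) (Fin L × Fin N) ℂ)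
    (hX : X = Matrix.vecMulVec x (star x)) (lam : ℝ) (hlam : 0 < lam)
    (hcond : ∀ Δ : Matrix (Fin L × Fin N) (Fin L × Fin N) ℂ, Δ.IsHermitian →
      (∀ i k l, quadMeas Δ (mvec i) k l = 0) →
      (∃ c > 0, (X + ((c : ℝ) : ℂ) • Δ).PosSemidef) →
      Δ ≠ 0 → 0 < Δ.trace.re + lam * Gfun X Δ) :
    ∀ Z : Matrix (Fin L × Fin N) (Fin L × Fin N) ℂ, Z.PosSemidef →
      (∀ i k l, quadMeas Z (mvec i) k l = quadMeas X (mvec i) k l) →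
      Z ≠ X → X.trace.re + lam * matL1 X < Z.trace.re + lam * matL1 Z := by
  intro Z hZ hmeas hne
  have hXherm : X.IsHermitian := hX ▸ (Matrix.posSemidef_vecMulVec_self_star x).isHermitian
  have hC1 : ∀ i k l, quadMeas (Z - X) (mvec i) k l = 0 := fun i k l => by
    rw [quadMeas_sub, hmeas, sub_self]
  have hC2 : ∃ c > 0, (X + ((c : ℝ) : ℂ) • (Z - X)).PosSemidef :=
    ⟨1, one_pos, by rwa [Complex.ofReal_one, one_smul, add_sub_cancel]⟩
  have hpos := hcond (Z - X) (hZ.isHermitian.sub hXherm) hC1 hC2 (sub_ne_zero.mpr hne)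
  have htrace : (Z - X).trace.re = Z.trace.re - X.trace.re := by
    rw [Matrix.trace_sub, Complex.sub_re]
  have hG : lam * Gfun X (Z - X) ≤ lam * (matL1 Z - matL1 X) :=
    mul_le_mul_of_nonneg_left (by linarith [Gfun_sub_add_matL1_le X Z]) hlam.le
  linarith
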